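/- arXiv:1005.3197 — 2 statements merged into one kernel-verified Lean document; each statement's English description precedes it below -/
import Mathlib

section
/- Let H be a complex Hilbert space, Z ⊆ B(H) a closed complex subspace closed under the Jordan triple product {x,y,z} := (1/2)(x y* z + z y* x), and v ∈ B(H) with v v* v = v. Suppose every z ∈ Z satisfies v v* z + z v* v = 2 z. Then every element x of the smallest closed complex subspace of B(H) containing Z and closed under the ternary product (a,b,c) ↦ a b* c satisfies v v* x + x v* v = 2 x. (That is, if Z equals its Peirce-2-space with respect to v, then so does the TRO generated by Z.) -/
noncomputable section

open Matrix

/-- A bundled complex Hilbert space. -/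
structure HilbertC : Type 1 where
  carrier : Type
  [nacg : NormedAddCommGroup carrier]
  [ips : InnerProductSpace ℂ carrier]
  [cs : CompleteSpace carrier]

attribute [instance] HilbertC.nacg HilbertC.ips HilbertC.cs

/-- The algebra `B(H)` of bounded operators on a complex Hilbert space `H`. -/
abbrev BH (H : HilbertC) := H.carrier →L[ℂ] H.carrier

/-- The Jordan triple product `{x,y,z} = (1/2)(x y* z + z y* x)`. -/
def jtp {A : Type*} [NonUnitalRing A] [StarRing A] [Module ℂ A] (x y z : A) : A :=
  (2⁻¹ : ℂ) • (x * star y * z + z * star y * x)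

/-- `Z` is a JC*-triple: a closed complex subspace of `B(H)` closed under the
Jordan triple product. -/
def IsJCTriple {H : HilbertC} (Z : Submodule ℂ (BH H)) : Prop :=
  IsClosed (Z : Set (BH H)) ∧ ∀ x ∈ Z, ∀ y ∈ Z, ∀ z ∈ Z, jtp x y z ∈ Z

/-- `T` is a TRO: a closed complex subspace of `B(H)` with `x y* z ∈ T`. -/
def IsTROsub {H : HilbertC} (T : Submodule ℂ (BH H)) : Prop :=
  IsClosed (T : Set (BH H)) ∧ ∀ x ∈ T, ∀ y ∈ T, ∀ z ∈ T, x * star y * z ∈ T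

/-- The smallest closed complex subspace of `B(H)` containing `S` and closed under
the ternary product `(x,y,z) ↦ x y* z`. -/
def troClosure {H : HilbertC} (S : Set (BH H)) : Submodule ℂ (BH H) :=
  sInf {W : Submodule ℂ (BH H) | IsClosed (W : Set (BH H)) ∧ S ⊆ W ∧
    ∀ x ∈ W, ∀ y ∈ W, ∀ z ∈ W, x * star y * z ∈ W}

/-- A triple homomorphism from a subspace `Z ⊆ B(H)` into `B(K)`. -/
def IsTripleHomB {H K : HilbertC} (Z : Submodule ℂ (BH H)) (φ : ↥Z →L[ℂ] BH K) : Prop :=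
  ∀ x y z w : ↥Z, (w : BH H) = jtp (x : BH H) (y : BH H) (z : BH H) →
    φ w = jtp (φ x) (φ y) (φ z)

/-- A triple homomorphism from a subspace `Z ⊆ B(H)` into a subspace `U ⊆ B(K)`. -/
def IsTripleHomInto {H K : HilbertC} (Z : Submodule ℂ (BH H)) (U : Submodule ℂ (BH K))
    (α : ↥Z →L[ℂ] ↥U) : Prop :=
  ∀ x y z w : ↥Z, (w : BH H) = jtp (x : BH H) (y : BH H) (z : BH H) →
    ((α w : BH K)) = jtp ((α x : BH K)) ((α y : BH K)) ((α z : BH K))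

/-- A TRO-homomorphism between subspaces of operator algebras. -/
def IsTROHom {H K : HilbertC} (T : Submodule ℂ (BH H)) (U : Submodule ℂ (BH K))
    (β : ↥T →L[ℂ] ↥U) : Prop :=
  ∀ x y z w : ↥T, (w : BH H) = (x : BH H) * star (y : BH H) * (z : BH H) →
    ((β w : BH K)) = (β x : BH K) * star ((β y : BH K)) * ((β z : BH K))

/-- `(T, ρ)` is a universal enveloping TRO of `Z`. -/
def IsUnivTRO {H Hh : HilbertC} (Z : Submodule ℂ (BH H)) (T : Submodule ℂ (BH Hh))
    (ρ : ↥Z →L[ℂ] ↥T) : Prop :=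
  IsTROsub T ∧ IsTripleHomInto Z T ρ ∧
  troClosure (Set.range fun z : ↥Z => (ρ z : BH Hh)) = T ∧
  ∀ (K : HilbertC) (U : Submodule ℂ (BH K)), IsTROsub U →
    ∀ α : ↥Z →L[ℂ] ↥U, IsTripleHomInto Z U α →
      ∃ β : ↥T →L[ℂ] ↥U, IsTROHom T U β ∧ ∀ z, β (ρ z) = α z

/-! A tripotent `v` splits off the idempotents `p = v v*` and `q = v* v`, and for idempotents the
Peirce-2 condition `p z + z q = 2 z` says exactly that `z` lies in the corner `p A q`. Corners are
closed and satisfy `p (a b* c) = a b* c = (a b* c) q`, so the Peirce-2 space of `v` is a closed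
TRO containing `Z`, and hence contains the TRO generated by `Z`. -/

theorem troClosure_le {H : HilbertC} {S : Set (BH H)} {W : Submodule ℂ (BH H)}
    (hW : IsClosed (W : Set (BH H))) (hSW : S ⊆ W)
    (hWtern : ∀ x ∈ W, ∀ y ∈ W, ∀ z ∈ W, x * star y * z ∈ W) : troClosure S ≤ W :=
  sInf_le ⟨hW, hSW, hWtern⟩

section PeirceTwo

variable (𝕜 : Type*) {A : Type*} [Field 𝕜] [Ring A] [Algebra 𝕜 A]

theorem mul_add_mul_eq_two_smul_iff [NeZero (2 : 𝕜)] {p q z : A} (hp : IsIdempotentElem p)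
    (hq : IsIdempotentElem q) : p * z + z * q = (2 : 𝕜) • z ↔ p * z = z ∧ z * q = z := by
  refine ⟨fun h => ?_, fun ⟨hpz, hzq⟩ => by rw [hpz, hzq, two_smul]⟩
  rw [two_smul] at h
  have hleft : p * z * q = p * z := by
    have := congrArg (p * ·) h
    simp only [mul_add, ← mul_assoc, hp.eq] at this
    exact add_left_cancel this
  have hright : p * z * q = z * q := by
    have := congrArg (· * q) h
    simp only [add_mul, mul_assoc, hq.eq] at this
    rw [← mul_assoc] at this
    exact add_right_cancel this
  have hpz : p * z = z := by
    rw [← hright, hleft, ← two_smul 𝕜, ← two_smul 𝕜] at h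
    exact smul_right_injective A (NeZero.ne (2 : 𝕜)) h
  exact ⟨hpz, by rw [← hright, hleft, hpz]⟩

variable [StarRing A]

theorem isIdempotentElem_mul_star {v : A} (hv : v * star v * v = v) :
    IsIdempotentElem (v * star v) := by
  rw [IsIdempotentElem, ← mul_assoc, hv]

theorem isIdempotentElem_star_mul {v : A} (hv : v * star v * v = v) :
    IsIdempotentElem (star v * v) := by
  rw [IsIdempotentElem, mul_assoc, ← mul_assoc v, hv]

def peirceTwo (v : A) : Submodule 𝕜 A where
  carrier := {z | v * star v * z + z * star v * v = (2 : 𝕜) • z}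
  add_mem' {a b} ha hb := by
    simp only [Set.mem_ofPred_eq, mul_add, add_mul, smul_add] at ha hb ⊢
    rw [← ha, ← hb]
    abel
  zero_mem' := by simp
  smul_mem' c a ha := by
    simp only [Set.mem_ofPred_eq, mul_smul_comm, smul_mul_assoc] at ha ⊢
    rw [← smul_add, ha, smul_comm]

variable {𝕜}

theorem mem_peirceTwo_iff [NeZero (2 : 𝕜)] {v z : A} (hv : v * star v * v = v) :
    z ∈ peirceTwo 𝕜 v ↔ v * star v * z = z ∧ z * (star v * v) = z := by
  rw [← mul_add_mul_eq_two_smul_iff 𝕜 (isIdempotentElem_mul_star hv)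
    (isIdempotentElem_star_mul hv), ← mul_assoc]
  rfl

theorem mul_star_mul_mem_peirceTwo [NeZero (2 : 𝕜)] {v a b c : A} (hv : v * star v * v = v)
    (ha : a ∈ peirceTwo 𝕜 v) (hc : c ∈ peirceTwo 𝕜 v) : a * star b * c ∈ peirceTwo 𝕜 v := by
  rw [mem_peirceTwo_iff hv] at ha hc ⊢
  constructor
  · rw [← mul_assoc, ← mul_assoc, ha.1]
  · rw [mul_assoc, hc.2]

theorem isClosed_peirceTwo [TopologicalSpace A] [T2Space A] [IsTopologicalRing A]
    [ContinuousConstSMul 𝕜 A] (v : A) : IsClosed (peirceTwo 𝕜 v : Set A) :=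
  isClosed_eq (by fun_prop) (by fun_prop)

end PeirceTwo

theorem stmt_7_general (H : HilbertC) (Z : Submodule ℂ (BH H))
    (v : BH H) (hv : v * star v * v = v)
    (hZ2 : ∀ z ∈ Z, v * star v * z + z * star v * v = (2 : ℂ) • z) :
    ∀ x ∈ troClosure (Z : Set (BH H)), v * star v * x + x * star v * v = (2 : ℂ) • x :=
  troClosure_le (isClosed_peirceTwo v) hZ2
    (fun _ ha _ _ _ hc => mul_star_mul_mem_peirceTwo hv ha hc)

/-- if a JC*-triple `Z` coincides with its Peirce-2-space relative to a
tripotent `v`, then so does the TRO generated by `Z`. -/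
theorem stmt_7 (H : HilbertC) (Z : Submodule ℂ (BH H))
    (hcl : IsClosed (Z : Set (BH H)))
    (hjtp : ∀ x ∈ Z, ∀ y ∈ Z, ∀ z ∈ Z, jtp x y z ∈ Z)
    (v : BH H) (hv : v * star v * v = v)
    (hZ2 : ∀ z ∈ Z, v * star v * z + z * star v * v = (2 : ℂ) • z) :
    ∀ x ∈ troClosure (Z : Set (BH H)), v * star v * x + x * star v * v = (2 : ℂ) • x :=
  stmt_7_general H Z v hv hZ2
end
end

section
/- Let n, m ≥ 2, let Z = M_{n,m}(ℂ) be the JC*-triple of complex n×m matrices with triple product {a,b,c} = (1/2)(a b* c + c b* a), and let (T, ρ) be a universal enveloping TRO of Z. Then T is TRO-isomorphic to M_{n,m}(ℂ) ⊕ M_{m,n}(ℂ): there exists a complex-linear bijection Φ : T → M_{n,m}(ℂ) × M_{m,n}(ℂ) with Φ(x y* z) = Φ(x) Φ(y)* Φ(z), where the ternary operation on the product is componentwise. -/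
/-!
Write `e i j = ρ (E_ij)`. Since `ρ` preserves Jordan triple products, the `e i j` satisfy the
Jordan relations of matrix units, and these alone determine every associative triple product:
`e_ij e_kl* e_rs = δ_jl δ_kr p_is + δ_sl δ_ki q_rj`, where `e_is = p_is + q_is` and
`p_is = e_il e_il* e_is` for any `l ≠ s` (this is where `n, m ≥ 2` enters). So the span of the
`2nm` elements `p_is`, `q_is` is a finite-dimensional, hence closed, TRO containing `ρ(Z)`,
and `dim T ≤ 2nm`. The universal property applied to `a ↦ (a, aᵀ)`, with `M_{n,m} ⊕ M_{m,n}`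
realised as off-diagonal block operators on `ℂ^(n+m)`, gives a TRO-homomorphism
`Φ : T → M_{n,m} ⊕ M_{m,n}`. It is onto because `Φ (ρ a) = (a, aᵀ)` and
`Φ (e_il e_il* e_is) = (E_is, 0)`, hence bijective by the dimension bound.
-/

noncomputable section

open Matrix

/-- The Jordan triple product on rectangular matrices. -/
def jtpM {n m : ℕ} (a b c : Matrix (Fin n) (Fin m) ℂ) : Matrix (Fin n) (Fin m) ℂ :=
  (2⁻¹ : ℂ) • (a * bᴴ * c + c * bᴴ * a)

/-- A triple homomorphism from the JC*-triple `M_{n,m}(ℂ)` into a subspace `U ⊆ B(K)`. -/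
def IsTripleHomMat {n m : ℕ} {K : HilbertC} (U : Submodule ℂ (BH K))
    (α : Matrix (Fin n) (Fin m) ℂ →L[ℂ] ↥U) : Prop :=
  ∀ a b c, ((α (jtpM a b c) : BH K)) = jtp ((α a : BH K)) ((α b : BH K)) ((α c : BH K))

/-- `(T, ρ)` is a universal enveloping TRO of the JC*-triple `M_{n,m}(ℂ)`. -/
def IsUnivTROMat {n m : ℕ} {Hh : HilbertC} (T : Submodule ℂ (BH Hh))
    (ρ : Matrix (Fin n) (Fin m) ℂ →L[ℂ] ↥T) : Prop :=
  IsTROsub T ∧ IsTripleHomMat T ρ ∧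
  troClosure (Set.range fun a => (ρ a : BH Hh)) = T ∧
  ∀ (K : HilbertC) (U : Submodule ℂ (BH K)), IsTROsub U →
    ∀ α : Matrix (Fin n) (Fin m) ℂ →L[ℂ] ↥U, IsTripleHomMat U α →
      ∃ β : ↥T →L[ℂ] ↥U, IsTROHom T U β ∧ ∀ a, β (ρ a) = α a

theorem add_self_injective {M : Type*} [AddMonoid M] [IsAddTorsionFree M] :
    Function.Injective fun x : M => x + x := by
  simpa only [two_nsmul] using nsmul_right_injective (M := M) two_ne_zero


theorem Submodule.mul_star_mul_mem_span {R A : Type*} [CommSemiring R] [StarRing R] [Semiring A]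
    [StarRing A] [Algebra R A] [StarModule R A] {S : Set A}
    (hS : ∀ x ∈ S, ∀ y ∈ S, ∀ z ∈ S, x * star y * z ∈ span R S) {x y z : A}
    (hx : x ∈ span R S) (hy : y ∈ span R S) (hz : z ∈ span R S) :
    x * star y * z ∈ span R S := by
  induction hx using Submodule.span_induction with
  | zero => simp
  | add x x' _ _ h h' => simpa [add_mul] using add_mem h h'
  | smul c x _ h => simpa [smul_mul_assoc] using smul_mem _ c h
  | mem x hx =>
    induction hy using Submodule.span_induction with
    | zero => simp
    | add y y' _ _ h h' => simpa [mul_add, add_mul] using add_mem h h'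
    | smul c y _ h => simpa [smul_mul_assoc, mul_smul_comm] using smul_mem _ (star c) h
    | mem y hy =>
      induction hz using Submodule.span_induction with
      | zero => simp
      | add z z' _ _ h h' => simpa [mul_add] using add_mem h h'
      | smul c z _ h => simpa [mul_smul_comm] using smul_mem _ c h
      | mem z hz => exact hS x hx y hy z hz

theorem Matrix.single_mul_conjTranspose_single_mul_single {I J α : Type*} [Fintype I] [Fintype J]
    [DecidableEq I] [DecidableEq J] [Semiring α] [StarRing α] (i k r : I) (j l s : J) :
    single i j (1 : α) * (single k l (1 : α))ᴴ * single r s (1 : α) =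
      if j = l ∧ k = r then single i s 1 else 0 := by
  rw [conjTranspose_single, star_one]
  by_cases hjl : j = l
  · subst hjl
    rw [single_mul_single_same, mul_one]
    by_cases hkr : k = r
    · subst hkr; rw [single_mul_single_same, mul_one, if_pos ⟨rfl, rfl⟩]
    · rw [single_mul_single_of_ne _ _ _ _ hkr, if_neg fun h => hkr h.2]
  · rw [single_mul_single_of_ne _ _ _ _ hjl, Matrix.zero_mul, if_neg fun h => hjl h.1]

theorem Matrix.map_mem_span_range_single {R M m n : Type*} [Semiring R] [AddCommMonoid M]
    [Module R M] [Fintype m] [Finite n] [DecidableEq m] [DecidableEq n]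
    (f : Matrix m n R →ₗ[R] M) (a : Matrix m n R) :
    f a ∈ Submodule.span R (Set.range fun p : m × n => f (single p.1 p.2 1)) := by
  have h := Submodule.mem_map_of_mem (f := f) ((stdBasis R m n).mem_span a)
  rwa [Submodule.map_span, ← Set.range_comp,
    show f ∘ stdBasis R m n = fun p => f (single p.1 p.2 1) from
      funext fun p => congrArg f (stdBasis_eq_single R p.1 p.2)] at h

section Grid

variable {B : Type*} [Ring B] [StarRing B] {I J : Type*}

/-- The relations `2 {E_ij, E_kl, E_rs} = δ_jl δ_kr E_is + δ_sl δ_ki E_rj` of the matrix units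
of `M_{I,J}(ℂ)` under the Jordan triple product. -/
def IsRectangularGrid [DecidableEq I] [DecidableEq J] (e : I → J → B) : Prop :=
  ∀ i j k l r s, e i j * star (e k l) * e r s + e r s * star (e k l) * e i j =
    (if j = l ∧ k = r then e i s else 0) + (if s = l ∧ k = i then e r j else 0)

/-- In the model `e i s ↦ (E_is, E_si)` of the enveloping TRO, `gridFst e i s ↦ (E_is, 0)` and
`gridSnd e i s ↦ (0, E_si)`. The column chosen here is immaterial by `gridFst_eq_row`. -/
def gridFst [Nontrivial J] (e : I → J → B) (i : I) (s : J) : B :=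
  e i (exists_ne s).choose * star (e i (exists_ne s).choose) * e i s

def gridSnd [Nontrivial J] (e : I → J → B) (i : I) (s : J) : B :=
  e i s - gridFst e i s

def gridParts [Nontrivial J] (e : I → J → B) : (I × J) ⊕ (I × J) → B :=
  Sum.elim (fun p => gridFst e p.1 p.2) (fun p => gridSnd e p.1 p.2)

open Submodule in
theorem mem_span_gridParts [Nontrivial J] (R : Type*) [Semiring R] [Module R B]
    (e : I → J → B) (i : I) (j : J) : e i j ∈ span R (Set.range (gridParts e)) := by
  rw [← add_sub_cancel (gridFst e i j) (e i j)]
  exact add_mem (subset_span ⟨.inl (i, j), rfl⟩) (subset_span ⟨.inr (i, j), rfl⟩)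

namespace IsRectangularGrid

variable [DecidableEq I] [DecidableEq J] {e : I → J → B}

theorem eq_add_of_col_ne (he : IsRectangularGrid e) (i r : I) {x y : J} (h : y ≠ x) :
    e i y = e i x * star (e r x) * e r y + e r y * star (e r x) * e i x := by
  simpa [h] using (he i x r x r y).symm

theorem eq_add_of_row_ne (he : IsRectangularGrid e) {i k : I} (j : J) (h : k ≠ i) :
    e i j = e i j * star (e k j) * e k j + e k j * star (e k j) * e i j := by
  simpa [h] using (he i j k j k j).symm

variable [IsAddTorsionFree B]

theorem tripotent (he : IsRectangularGrid e) (i : I) (j : J) :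
    e i j * star (e i j) * e i j = e i j :=
  add_self_injective (by simpa using he i j i j i j)

theorem star_mul_mul_star_self (he : IsRectangularGrid e) (i : I) (j : J) :
    star (e i j) * e i j * star (e i j) = star (e i j) := by
  simpa [mul_assoc] using congrArg star (he.tripotent i j)

/-- For tripotents `u, v` with `{u, u, v} = 0` the two halves `u u* v` and `v u* u` of the
Jordan product agree (compare both with `u u* v u* u`), hence both vanish. -/
theorem mul_star_mul_eq_zero_of_ne (he : IsRectangularGrid e) {i k : I} {j l : J} (hik : i ≠ k)
    (hjl : j ≠ l) :
    e i j * star (e i j) * e k l = 0 ∧ e k l * star (e i j) * e i j = 0 := by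
  set u := e i j
  set v := e k l
  have hu : u * star u * u = u := he.tripotent i j
  have hsum : u * star u * v + v * star u * u = 0 := by simpa [hik, hjl.symm] using he i j i j k l
  have hX : u * star u * v + u * star u * v * star u * u = 0 := by
    calc _ = u * star u * (u * star u * v + v * star u * u) := by
          rw [mul_add, ← mul_assoc, ← mul_assoc, hu]; noncomm_ring
      _ = 0 := by rw [hsum, mul_zero]
  have hY : u * star u * v * star u * u + v * star u * u = 0 := by
    calc _ = (u * star u * v + v * star u * u) * (star u * u) := by
          rw [add_mul, show v * star u * u * (star u * u) = v * star u * (u * star u * u) by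
            noncomm_ring, hu]; noncomm_ring
      _ = 0 := by rw [hsum, zero_mul]
  have hXY : u * star u * v = v * star u * u :=
    (eq_neg_of_add_eq_zero_left hX).trans (eq_neg_of_add_eq_zero_right hY).symm
  have hX0 : u * star u * v = 0 :=
    add_self_injective (by simp only [add_zero]; nth_rw 2 [hXY]; exact hsum)
  exact ⟨hX0, hXY ▸ hX0⟩

theorem star_mul_eq_zero (he : IsRectangularGrid e) {i k : I} {j l : J} (hik : i ≠ k)
    (hjl : j ≠ l) : star (e i j) * e k l = 0 :=
  calc star (e i j) * e k l = star (e i j) * e i j * star (e i j) * e k l := by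
        rw [he.star_mul_mul_star_self]
    _ = star (e i j) * (e i j * star (e i j) * e k l) := by noncomm_ring
    _ = 0 := by rw [(he.mul_star_mul_eq_zero_of_ne hik hjl).1, mul_zero]

theorem mul_star_eq_zero (he : IsRectangularGrid e) {i k : I} {j l : J} (hik : i ≠ k)
    (hjl : j ≠ l) : e i j * star (e k l) = 0 :=
  calc e i j * star (e k l) = e i j * (star (e k l) * e k l * star (e k l)) := by
        rw [he.star_mul_mul_star_self]
    _ = e i j * star (e k l) * e k l * star (e k l) := by noncomm_ring
    _ = 0 := by rw [(he.mul_star_mul_eq_zero_of_ne hik.symm hjl.symm).2, zero_mul]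

theorem mul_star_mul_row_eq_zero [Nontrivial I] (he : IsRectangularGrid e) {i : I} {j l s : J}
    (hjl : j ≠ l) (hsl : s ≠ l) : e i j * star (e i l) * e i s = 0 := by
  obtain ⟨y, hy⟩ := exists_ne i
  have hA : e i j * star (e y l) = 0 := he.mul_star_eq_zero hy.symm hjl
  have hB : star (e i l) * e y s = 0 := he.star_mul_eq_zero hy.symm hsl.symm
  calc e i j * star (e i l) * e i s
      = e i j * star (e i l) * (e i l * star (e y l) * e y s + e y s * star (e y l) * e i l) :=
        congrArg _ (he.eq_add_of_col_ne i y hsl)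
    _ = (e i l * star (e i l) * e i j + e i j * star (e i l) * e i l) * star (e y l) * e y s
        - e i l * star (e i l) * (e i j * star (e y l)) * e y s
        + e i j * (star (e i l) * e y s) * star (e y l) * e i l := by noncomm_ring
    _ = 0 := by rw [← he.eq_add_of_col_ne i i hjl, hA, hB]; noncomm_ring

theorem mul_star_mul_col_eq_zero [Nontrivial J] (he : IsRectangularGrid e) {i k r : I} {l : J}
    (hki : k ≠ i) (hkr : k ≠ r) : e i l * star (e k l) * e r l = 0 := by
  obtain ⟨x, hx⟩ := exists_ne l
  have hA : e i x * star (e k l) = 0 := he.mul_star_eq_zero hki.symm hx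
  have hB : star (e k x) * e r l = 0 := he.star_mul_eq_zero hkr hx
  calc e i l * star (e k l) * e r l
      = (e i x * star (e k x) * e k l + e k l * star (e k x) * e i x) * star (e k l) * e r l :=
        congrArg (· * star (e k l) * e r l) (he.eq_add_of_col_ne i k hx.symm)
    _ = e i x * (star (e k x) * (e r l * star (e k l) * e k l + e k l * star (e k l) * e r l))
        - e i x * (star (e k x) * e r l) * star (e k l) * e k l
        + e k l * star (e k x) * (e i x * star (e k l)) * e r l := by noncomm_ring
    _ = 0 := by rw [← he.eq_add_of_row_ne l hkr, hA, hB]; noncomm_ring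

theorem mul_star_mul_eq_zero [Nontrivial I] [Nontrivial J] (he : IsRectangularGrid e)
    {i k r : I} {j l s : J} (h₁ : ¬(j = l ∧ k = r)) (h₂ : ¬(s = l ∧ k = i)) :
    e i j * star (e k l) * e r s = 0 := by
  by_cases hR : k ≠ r ∧ l ≠ s
  · rw [mul_assoc, he.star_mul_eq_zero hR.1 hR.2, mul_zero]
  by_cases hL : i ≠ k ∧ j ≠ l
  · rw [he.mul_star_eq_zero hL.1 hL.2, zero_mul]
  rcases eq_or_ne k r with rfl | hkr
  · have hjl : j ≠ l := fun h => h₁ ⟨h, rfl⟩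
    obtain rfl : i = k := by_contra fun h => hL ⟨h, hjl⟩
    exact he.mul_star_mul_row_eq_zero hjl fun h => h₂ ⟨h, rfl⟩
  · obtain rfl : l = s := by_contra fun h => hR ⟨hkr, h⟩
    have hki : k ≠ i := fun h => h₂ ⟨rfl, h⟩
    obtain rfl : j = l := by_contra fun h => hL ⟨hki.symm, h⟩
    exact he.mul_star_mul_col_eq_zero hki hkr


theorem mul_star_mul_row_eq_col (he : IsRectangularGrid e) {i k : I} {l s : J} (hls : l ≠ s)
    (hki : k ≠ i) :
    e i l * star (e i l) * e i s = e i s * star (e k s) * e k s := by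
  have hA : star (e i l) * e k s = 0 := he.star_mul_eq_zero hki.symm hls
  have hB : e i l * star (e k s) = 0 := he.mul_star_eq_zero hki.symm hls
  calc e i l * star (e i l) * e i s
      = e i l * star (e i l) * (e i s * star (e k s) * e k s + e k s * star (e k s) * e i s) :=
        congrArg _ (he.eq_add_of_row_ne s hki)
    _ = (e i l * star (e i l) * e i s + e i s * star (e i l) * e i l) * star (e k s) * e k s
        - e i s * star (e i l) * (e i l * star (e k s)) * e k s
        + e i l * (star (e i l) * e k s) * star (e k s) * e i s := by noncomm_ring
    _ = e i s * star (e k s) * e k s := by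
        rw [← he.eq_add_of_col_ne i i hls.symm, hA, hB]; noncomm_ring

theorem gridFst_eq_col [Nontrivial J] (he : IsRectangularGrid e) {i k : I} (s : J) (hki : k ≠ i) :
    e i s * star (e k s) * e k s = gridFst e i s :=
  (he.mul_star_mul_row_eq_col (exists_ne s).choose_spec hki).symm

theorem gridFst_eq_row [Nontrivial I] [Nontrivial J] (he : IsRectangularGrid e) (i : I) {l s : J}
    (hls : l ≠ s) : e i l * star (e i l) * e i s = gridFst e i s := by
  obtain ⟨k, hk⟩ := exists_ne i
  rw [he.mul_star_mul_row_eq_col hls hk, he.gridFst_eq_col s hk]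

theorem gridSnd_eq_col [Nontrivial J] (he : IsRectangularGrid e) {i k : I} (s : J) (hki : k ≠ i) :
    e k s * star (e k s) * e i s = gridSnd e i s := by
  rw [gridSnd, ← he.gridFst_eq_col s hki, eq_sub_iff_add_eq', ← he.eq_add_of_row_ne s hki]

theorem gridSnd_eq_row [Nontrivial I] [Nontrivial J] (he : IsRectangularGrid e) (i : I) {l s : J}
    (hls : l ≠ s) : e i s * star (e i l) * e i l = gridSnd e i s := by
  rw [gridSnd, ← he.gridFst_eq_row i hls, eq_sub_iff_add_eq',
    ← he.eq_add_of_col_ne i i hls.symm]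

variable [Nontrivial I] [Nontrivial J]

theorem mul_star_mul_eq_gridSnd_of_ne (he : IsRectangularGrid e) {i r : I} {j l : J} (hir : i ≠ r)
    (hjl : j ≠ l) : e i j * star (e i l) * e r l = gridSnd e r j := by
  have hA : star (e i l) * e r j = 0 := he.star_mul_eq_zero hir hjl.symm
  have hB : e r j * star (e i j) * e r j = 0 :=
    he.mul_star_mul_eq_zero (fun h => hir h.2) (fun h => hir h.2)
  calc e i j * star (e i l) * e r l
      = e i j * star (e i l) * (e r j * star (e i j) * e i l + e i l * star (e i j) * e r j) :=
        congrArg _ (he.eq_add_of_col_ne r i hjl.symm)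
    _ = e i j * (star (e i l) * e r j) * star (e i j) * e i l
        + e i j * star (e i l) * e i l * star (e i j) * e r j := by noncomm_ring
    _ = (e i j - e i j * star (e r j) * e r j) * star (e i j) * e r j := by
        rw [hA, he.gridSnd_eq_row i hjl.symm, gridSnd, he.gridFst_eq_col j hir.symm]; noncomm_ring
    _ = e i j * star (e i j) * e r j - e i j * star (e r j) * (e r j * star (e i j) * e r j) := by
        noncomm_ring
    _ = gridSnd e r j := by rw [hB, he.gridSnd_eq_col j hir]; noncomm_ring

theorem mul_star_mul_eq_gridSnd (he : IsRectangularGrid e) {i r : I} {j l : J}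
    (h : ¬(j = l ∧ i = r)) : e i j * star (e i l) * e r l = gridSnd e r j := by
  rcases eq_or_ne i r with rfl | hir
  · exact he.gridSnd_eq_row i fun h' => h ⟨h'.symm, rfl⟩
  rcases eq_or_ne j l with rfl | hjl
  · exact he.gridSnd_eq_col j hir
  · exact he.mul_star_mul_eq_gridSnd_of_ne hir hjl

theorem mul_star_mul_eq_gridFst (he : IsRectangularGrid e) {i k : I} {l s : J}
    (h : ¬(k = i ∧ l = s)) : e i l * star (e k l) * e k s = gridFst e i s := by
  rcases eq_or_ne k i with rfl | hki
  · exact he.gridFst_eq_row k fun h' => h ⟨rfl, h'⟩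
  have hrel : e i l * star (e k l) * e k s + e k s * star (e k l) * e i l = e i s := by
    simpa [hki] using he i l k l k s
  rw [eq_sub_of_add_eq hrel, he.mul_star_mul_eq_gridSnd fun h' => hki h'.2, gridSnd,
    sub_sub_cancel]

theorem mul_star_mul_eq (he : IsRectangularGrid e) (i k r : I) (j l s : J) :
    e i j * star (e k l) * e r s =
      (if j = l ∧ k = r then gridFst e i s else 0) +
        (if s = l ∧ k = i then gridSnd e r j else 0) := by
  split_ifs with h₁ h₂ h₂
  · obtain ⟨rfl, rfl⟩ := h₁
    obtain ⟨rfl, rfl⟩ := h₂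
    rw [he.tripotent, gridSnd, add_sub_cancel]
  · obtain ⟨rfl, rfl⟩ := h₁
    rw [add_zero, he.mul_star_mul_eq_gridFst fun h => h₂ ⟨h.2.symm, h.1⟩]
  · obtain ⟨rfl, rfl⟩ := h₂
    rw [zero_add, he.mul_star_mul_eq_gridSnd fun h => h₁ ⟨h.1, h.2⟩]
  · rw [add_zero, he.mul_star_mul_eq_zero h₁ h₂]

theorem gridSnd_mul_star_mul_col_of_ne (he : IsRectangularGrid e) {k r : I} (b s : J)
    (hkr : k ≠ r) : gridSnd e r b * star (e k s) * e k s = 0 := by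
  rcases eq_or_ne b s with rfl | hbs
  · obtain ⟨l, hl⟩ := exists_ne b
    calc gridSnd e r b * star (e k b) * e k b
        = e r b * star (e r l) * (e r l * star (e k b) * e k b) := by
          rw [← he.gridSnd_eq_row r hl]; noncomm_ring
      _ = 0 := by rw [he.mul_star_mul_eq_zero (fun h => hl h.1) (fun h => hkr h.2), mul_zero]
  · calc gridSnd e r b * star (e k s) * e k s
        = e k b * star (e k b) * (e r b * star (e k s) * e k s) := by
          rw [← he.gridSnd_eq_col b hkr]; noncomm_ring
      _ = 0 := by rw [he.mul_star_mul_eq_zero (fun h => hbs h.1) (fun h => hkr h.2), mul_zero]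

theorem gridFst_mul_star_mul_col (he : IsRectangularGrid e) (a k : I) (s : J) :
    gridFst e a s * star (e k s) * e k s = gridFst e a s := by
  rcases eq_or_ne k a with rfl | hka
  · obtain ⟨l, hl⟩ := exists_ne s
    calc gridFst e k s * star (e k s) * e k s
        = e k l * star (e k l) * (e k s * star (e k s) * e k s) := by
          rw [← he.gridFst_eq_row k hl]; noncomm_ring
      _ = gridFst e k s := by rw [he.tripotent, he.gridFst_eq_row k hl]
  · calc gridFst e a s * star (e k s) * e k s
        = e a s * star (e k s) * e k s - gridSnd e a s * star (e k s) * e k s := by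
          rw [gridSnd]; noncomm_ring
      _ = gridFst e a s := by
          rw [he.gridFst_eq_col s hka, he.gridSnd_mul_star_mul_col_of_ne s s hka, sub_zero]

theorem gridFst_mul_star_mul_row_of_ne (he : IsRectangularGrid e) {a r : I} {l s : J}
    (hls : l ≠ s) : gridFst e a s * star (e r l) * e r l = 0 := by
  rcases eq_or_ne r a with rfl | hra
  · obtain ⟨k, hk⟩ := exists_ne r
    calc gridFst e r s * star (e r l) * e r l
        = e r s * star (e k s) * (e k s * star (e r l) * e r l) := by
          rw [← he.gridFst_eq_col s hk]; noncomm_ring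
      _ = 0 := by
          rw [he.mul_star_mul_eq_zero (fun h => hls h.1.symm) (fun h => hk h.2.symm), mul_zero]
  · calc gridFst e a s * star (e r l) * e r l
        = e a l * star (e a l) * (e a s * star (e r l) * e r l) := by
          rw [← he.gridFst_eq_row a hls]; noncomm_ring
      _ = 0 := by
          rw [he.mul_star_mul_eq_zero (fun h => hls h.1.symm) (fun h => hra h.2), mul_zero]

theorem gridSnd_mul_star_mul_row (he : IsRectangularGrid e) (r : I) (b l : J) :
    gridSnd e r b * star (e r l) * e r l = gridSnd e r b := by
  rcases eq_or_ne l b with rfl | hlb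
  · obtain ⟨k, hk⟩ := exists_ne r
    calc gridSnd e r l * star (e r l) * e r l
        = e k l * star (e k l) * (e r l * star (e r l) * e r l) := by
          rw [← he.gridSnd_eq_col l hk]; noncomm_ring
      _ = gridSnd e r l := by rw [he.tripotent, he.gridSnd_eq_col l hk]
  · calc gridSnd e r b * star (e r l) * e r l
        = e r b * star (e r l) * e r l - gridFst e r b * star (e r l) * e r l := by
          rw [gridSnd]; noncomm_ring
      _ = gridSnd e r b := by
          rw [he.gridSnd_eq_row r hlb, he.gridFst_mul_star_mul_row_of_ne hlb, sub_zero]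

theorem mul_star_mul_gridFst (he : IsRectangularGrid e) (a k r : I) (b l s : J) :
    e a b * star (e k l) * gridFst e r s = if b = l ∧ k = r then gridFst e a s else 0 := by
  obtain ⟨k', hk'⟩ := exists_ne r
  rw [← he.gridFst_eq_col s hk', ← mul_assoc, ← mul_assoc, he.mul_star_mul_eq]
  split_ifs <;>
    simp only [add_mul, zero_mul, add_zero, zero_add, he.gridFst_mul_star_mul_col,
      he.gridSnd_mul_star_mul_col_of_ne _ _ hk']

theorem mul_star_mul_gridSnd (he : IsRectangularGrid e) (a k r : I) (b l s : J) :
    e a b * star (e k l) * gridSnd e r s = if s = l ∧ k = a then gridSnd e r b else 0 := by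
  obtain ⟨l', hl'⟩ := exists_ne s
  rw [← he.gridSnd_eq_row r hl', ← mul_assoc, ← mul_assoc, he.mul_star_mul_eq]
  split_ifs <;>
    simp only [add_mul, zero_mul, add_zero, zero_add, he.gridSnd_mul_star_mul_row,
      he.gridFst_mul_star_mul_row_of_ne hl']

theorem exists_gridParts_eq_mul_star_mul (he : IsRectangularGrid e) (p : (I × J) ⊕ (I × J)) :
    ∃ i k r j l s, gridParts e p = e i j * star (e k l) * e r s := by
  rcases p with ⟨i, s⟩ | ⟨i, s⟩ <;> obtain ⟨l, hl⟩ := exists_ne s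
  · exact ⟨i, i, i, l, l, s, (he.gridFst_eq_row i hl).symm⟩
  · exact ⟨i, i, i, s, l, l, (he.gridSnd_eq_row i hl).symm⟩

open Submodule in
theorem mul_star_mul_mem_span_gridParts_of_mem {R : Type*} [CommSemiring R] [Algebra R B]
    (he : IsRectangularGrid e) (a k : I) (b l : J)
    {w : B} (hw : w ∈ span R (Set.range (gridParts e))) :
    e a b * star (e k l) * w ∈ span R (Set.range (gridParts e)) := by
  suffices h : span R (Set.range (gridParts e)) ≤
      (span R (Set.range (gridParts e))).comap (LinearMap.mulLeft R (e a b * star (e k l))) from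
    h hw
  refine span_le.2 ?_
  rintro _ ⟨⟨r, s⟩ | ⟨r, s⟩, rfl⟩
  · change e a b * star (e k l) * gridFst e r s ∈ span R (Set.range (gridParts e))
    rw [he.mul_star_mul_gridFst]
    split_ifs
    exacts [subset_span ⟨.inl (a, s), rfl⟩, zero_mem _]
  · change e a b * star (e k l) * gridSnd e r s ∈ span R (Set.range (gridParts e))
    rw [he.mul_star_mul_gridSnd]
    split_ifs
    exacts [subset_span ⟨.inr (r, b), rfl⟩, zero_mem _]

open Submodule in
theorem mul_star_mul_mem_span_gridParts {R : Type*} [CommSemiring R] [StarRing R] [Algebra R B]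
    [StarModule R B] (he : IsRectangularGrid e) {x y z : B}
    (hx : x ∈ span R (Set.range (gridParts e))) (hy : y ∈ span R (Set.range (gridParts e)))
    (hz : z ∈ span R (Set.range (gridParts e))) :
    x * star y * z ∈ span R (Set.range (gridParts e)) := by
  refine mul_star_mul_mem_span ?_ hx hy hz
  rintro _ ⟨p, rfl⟩ _ ⟨q, rfl⟩ z hz
  obtain ⟨i, k, r, j, l, s, hp⟩ := he.exists_gridParts_eq_mul_star_mul p
  obtain ⟨i', k', r', j', l', s', hq⟩ := he.exists_gridParts_eq_mul_star_mul q
  have h : gridParts e p * star (gridParts e q) * z =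
      e i j * star (e k l) * (e r s * star (e r' s') * (e k' l' * star (e i' j') * z)) := by
    rw [hp, hq]; simp only [star_mul, star_star]; noncomm_ring
  rw [h]
  iterate 3 apply he.mul_star_mul_mem_span_gridParts_of_mem
  exact subset_span hz

end IsRectangularGrid
end Grid

instance (H : HilbertC) : IsAddTorsionFree (BH H) := IsAddTorsionFree.of_isTorsionFree ℂ _

theorem troClosure_le_of_isTROsub {H : HilbertC} {S : Set (BH H)} {V : Submodule ℂ (BH H)}
    (hV : IsTROsub V) (hSV : S ⊆ V) : troClosure S ≤ V :=
  sInf_le ⟨hV.1, hSV, hV.2⟩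

open Submodule in
theorem IsRectangularGrid.troClosure_le_span_gridParts {I J : Type*} [DecidableEq I]
    [DecidableEq J] [Finite I] [Finite J] [Nontrivial I] [Nontrivial J] {H : HilbertC}
    {e : I → J → BH H} (he : IsRectangularGrid e) {S : Set (BH H)}
    (hS : S ⊆ span ℂ (Set.range fun p : I × J => e p.1 p.2)) :
    troClosure S ≤ span ℂ (Set.range (gridParts e)) := by
  have := FiniteDimensional.span_of_finite ℂ (Set.finite_range (gridParts e))
  refine troClosure_le_of_isTROsub ⟨closed_of_finiteDimensional _,
    fun x hx y hy z hz => he.mul_star_mul_mem_span_gridParts hx hy hz⟩ (hS.trans ?_)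
  exact span_le.2 (Set.range_subset_iff.2 fun p => mem_span_gridParts ℂ e p.1 p.2)

theorem IsTripleHomMat.isRectangularGrid {n m : ℕ} {K : HilbertC} {U : Submodule ℂ (BH K)}
    {α : Matrix (Fin n) (Fin m) ℂ →L[ℂ] U} (hα : IsTripleHomMat U α) :
    IsRectangularGrid fun i j => (α (single i j 1) : BH K) := by
  set f : Matrix (Fin n) (Fin m) ℂ →ₗ[ℂ] BH K := U.subtype ∘ₗ α.toLinearMap
  have hf : ∀ a b c,
      f a * star (f b) * f c + f c * star (f b) * f a = f (a * bᴴ * c + c * bᴴ * a) :=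
    fun a b c => smul_right_injective _ (inv_ne_zero two_ne_zero : (2 : ℂ)⁻¹ ≠ 0)
      (by simpa [jtp, jtpM, f] using (hα a b c).symm)
  intro i j k l r s
  have h := hf (single i j 1) (single k l 1) (single r s 1)
  simp only [single_mul_conjTranspose_single_mul_single, map_add, apply_ite f, map_zero] at h
  exact h

def blockSpace (ι κ : Type) [Fintype ι] [Fintype κ] : HilbertC :=
  HilbertC.mk (EuclideanSpace ℂ (ι ⊕ κ))

section OffDiag

variable (ι κ : Type) [Fintype ι] [Fintype κ] [DecidableEq ι] [DecidableEq κ]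

def blockOp : Matrix (ι ⊕ κ) (ι ⊕ κ) ℂ ≃⋆ₐ[ℂ] BH (blockSpace ι κ) :=
  toEuclideanCLM

def offDiagOp : Matrix ι κ ℂ × Matrix κ ι ℂ →ₗ[ℂ] BH (blockSpace ι κ) where
  toFun p := blockOp ι κ (fromBlocks 0 p.1 p.2 0)
  map_add' p q := by rw [← map_add, fromBlocks_add, add_zero, add_zero]; rfl
  map_smul' c p := by rw [← map_smul, fromBlocks_smul, smul_zero, smul_zero]; rfl

theorem offDiagOp_injective : Function.Injective (offDiagOp ι κ) := fun p q h => by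
  obtain ⟨-, h₁, h₂, -⟩ := fromBlocks_inj.1 ((blockOp ι κ).injective h)
  exact Prod.ext h₁ h₂

theorem offDiagOp_mul_star_mul (p q r : Matrix ι κ ℂ × Matrix κ ι ℂ) :
    offDiagOp ι κ p * star (offDiagOp ι κ q) * offDiagOp ι κ r =
      offDiagOp ι κ (p.1 * q.1ᴴ * r.1, p.2 * q.2ᴴ * r.2) := by
  simp only [offDiagOp, LinearMap.coe_mk, AddHom.coe_mk, ← map_star, ← map_mul,
    star_eq_conjTranspose, fromBlocks_conjTranspose, fromBlocks_multiply]
  simp [Matrix.mul_assoc]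

theorem isTROsub_range_offDiagOp : IsTROsub (LinearMap.range (offDiagOp ι κ)) := by
  refine ⟨Submodule.closed_of_finiteDimensional _, ?_⟩
  rintro _ ⟨p, rfl⟩ _ ⟨q, rfl⟩ _ ⟨r, rfl⟩
  rw [offDiagOp_mul_star_mul]
  exact LinearMap.mem_range_self _ _

def offDiagDecode :
    LinearMap.range (offDiagOp ι κ) ≃ₗ[ℂ] Matrix ι κ ℂ × Matrix κ ι ℂ :=
  (LinearEquiv.ofInjective _ (offDiagOp_injective ι κ)).symm

theorem offDiagOp_offDiagDecode (u : LinearMap.range (offDiagOp ι κ)) :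
    offDiagOp ι κ (offDiagDecode ι κ u) = u := by
  have h := LinearEquiv.ofInjective_apply (f := offDiagOp ι κ) (h := offDiagOp_injective ι κ)
    (offDiagDecode ι κ u)
  rwa [offDiagDecode, LinearEquiv.apply_symm_apply, eq_comm] at h

end OffDiag

theorem IsTROHom.offDiagDecode_mul_star_mul {ι κ : Type} [Fintype ι] [Fintype κ]
    [DecidableEq ι] [DecidableEq κ] {H : HilbertC} {T : Submodule ℂ (BH H)}
    {β : T →L[ℂ] LinearMap.range (offDiagOp ι κ)} (hβ : IsTROHom T _ β) {x y z w : T}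
    (hw : (w : BH H) = x * star (y : BH H) * z) :
    offDiagDecode ι κ (β w) =
      ((offDiagDecode ι κ (β x)).1 * (offDiagDecode ι κ (β y)).1ᴴ *
          (offDiagDecode ι κ (β z)).1,
        (offDiagDecode ι κ (β x)).2 * (offDiagDecode ι κ (β y)).2ᴴ *
          (offDiagDecode ι κ (β z)).2) := by
  apply offDiagOp_injective
  rw [← offDiagOp_mul_star_mul]
  simpa only [offDiagOp_offDiagDecode] using hβ x y z w hw

def pairTranspose (n m : ℕ) :
    Matrix (Fin n) (Fin m) ℂ →L[ℂ] LinearMap.range (offDiagOp (Fin n) (Fin m)) :=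
  LinearMap.toContinuousLinearMap <| LinearMap.codRestrict _
    (offDiagOp _ _ ∘ₗ LinearMap.id.prod (transposeLinearEquiv _ _ ℂ ℂ).toLinearMap)
    fun _ => LinearMap.mem_range_self _ _

theorem offDiagDecode_pairTranspose {n m : ℕ} (a : Matrix (Fin n) (Fin m) ℂ) :
    offDiagDecode _ _ (pairTranspose n m a) = (a, aᵀ) :=
  offDiagOp_injective _ _ (offDiagOp_offDiagDecode _ _ _)

theorem jtpM_transpose {n m : ℕ} (a b c : Matrix (Fin n) (Fin m) ℂ) :
    (jtpM a b c)ᵀ = (2⁻¹ : ℂ) • (aᵀ * bᵀᴴ * cᵀ + cᵀ * bᵀᴴ * aᵀ) := by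
  simp only [jtpM, transpose_smul, transpose_add, transpose_mul, conjTranspose_transpose,
    transpose_conjTranspose, Matrix.mul_assoc, add_comm]

theorem isTripleHomMat_pairTranspose (n m : ℕ) : IsTripleHomMat _ (pairTranspose n m) := by
  intro a b c
  change offDiagOp _ _ (jtpM a b c, (jtpM a b c)ᵀ) = (2⁻¹ : ℂ) • (offDiagOp _ _ (a, aᵀ) *
    star (offDiagOp _ _ (b, bᵀ)) * offDiagOp _ _ (c, cᵀ) + offDiagOp _ _ (c, cᵀ) *
      star (offDiagOp _ _ (b, bᵀ)) * offDiagOp _ _ (a, aᵀ))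
  rw [offDiagOp_mul_star_mul, offDiagOp_mul_star_mul, ← map_add, ← map_smul, jtpM_transpose]
  rfl

theorem surjective_offDiagDecode_comp {n m : ℕ} [Nontrivial (Fin m)] {H : HilbertC}
    {T : Submodule ℂ (BH H)} (hT : IsTROsub T) {ρ : Matrix (Fin n) (Fin m) ℂ →L[ℂ] T}
    {β : T →L[ℂ] LinearMap.range (offDiagOp (Fin n) (Fin m))} (hβ : IsTROHom T _ β)
    (hβρ : ∀ a, β (ρ a) = pairTranspose n m a) :
    Function.Surjective ((offDiagDecode _ _).toLinearMap ∘ₗ β.toLinearMap) := by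
  set Φ := (offDiagDecode _ _).toLinearMap ∘ₗ β.toLinearMap
  have hΦρ : ∀ a, offDiagDecode _ _ (β (ρ a)) = (a, aᵀ) := fun a => by
    rw [hβρ, offDiagDecode_pairTranspose]
  have hsingle : ∀ i s, (single i s 1, 0) ∈ LinearMap.range Φ := by
    intro i s
    obtain ⟨l, hl⟩ := exists_ne s
    let x := ρ (single i l 1)
    let z := ρ (single i s 1)
    refine ⟨⟨x * star (x : BH H) * z, hT.2 _ x.2 _ x.2 _ z.2⟩, ?_⟩
    change offDiagDecode _ _ (β _) = _
    rw [hβ.offDiagDecode_mul_star_mul (x := x) (y := x) (z := z) rfl, hΦρ, hΦρ]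
    simp [hl]
  have hfst : ∀ A, (A, 0) ∈ LinearMap.range Φ := fun A =>
    Submodule.span_le (p := (LinearMap.range Φ).comap (LinearMap.inl ℂ _ _)) |>.2
      (by rintro _ ⟨⟨i, j⟩, rfl⟩; rw [stdBasis_eq_single]; exact hsingle i j)
      ((stdBasis ℂ _ _).mem_span A)
  rw [← LinearMap.range_eq_top, eq_top_iff]
  rintro ⟨A, B⟩ -
  rw [show (A, B) = (A - Bᵀ, 0) + (Bᵀ, Bᵀᵀ) by simp]
  exact add_mem (hfst _) ⟨ρ Bᵀ, hΦρ Bᵀ⟩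

/-- for `n, m ≥ 2`, the universal enveloping TRO of `M_{n,m}(ℂ)` is
TRO-isomorphic to `M_{n,m}(ℂ) ⊕ M_{m,n}(ℂ)`. -/
theorem stmt_16 (n m : ℕ) (hn : 2 ≤ n) (hm : 2 ≤ m) (Hh : HilbertC)
    (T : Submodule ℂ (BH Hh)) (ρ : Matrix (Fin n) (Fin m) ℂ →L[ℂ] ↥T)
    (hUniv : IsUnivTROMat T ρ) :
    ∃ Φ : ↥T →ₗ[ℂ] Matrix (Fin n) (Fin m) ℂ × Matrix (Fin m) (Fin n) ℂ,
      Function.Bijective Φ ∧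
      ∀ x y z w : ↥T, (w : BH Hh) = (x : BH Hh) * star (y : BH Hh) * (z : BH Hh) →
        (Φ w).1 = (Φ x).1 * ((Φ y).1)ᴴ * (Φ z).1 ∧
        (Φ w).2 = (Φ x).2 * ((Φ y).2)ᴴ * (Φ z).2 := by
  obtain ⟨hT, hρ, hgen, huniv⟩ := hUniv
  have := Fin.nontrivial_iff_two_le.2 hn
  have := Fin.nontrivial_iff_two_le.2 hm
  set e : Fin n → Fin m → BH Hh := fun i j => ρ (single i j 1)
  have hle : T ≤ Submodule.span ℂ (Set.range (gridParts e)) := hgen ▸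
    hρ.isRectangularGrid.troClosure_le_span_gridParts (Set.range_subset_iff.2 fun a =>
      map_mem_span_range_single (T.subtype ∘ₗ ρ.toLinearMap) a)
  have := FiniteDimensional.span_of_finite ℂ (Set.finite_range (gridParts e))
  have := Submodule.finiteDimensional_of_le hle
  have hdim : Module.finrank ℂ T ≤
      Module.finrank ℂ (Matrix (Fin n) (Fin m) ℂ × Matrix (Fin m) (Fin n) ℂ) := by
    refine (Submodule.finrank_mono hle).trans ((finrank_range_le_card _).trans (le_of_eq ?_))
    simp [Module.finrank_prod, Module.finrank_matrix, mul_comm]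
  obtain ⟨β, hβ, hβρ⟩ :=
    huniv _ _ (isTROsub_range_offDiagOp _ _) _ (isTripleHomMat_pairTranspose n m)
  exact ⟨_, OrzechProperty.bijective_of_surjective_of_finrank_le _
      (surjective_offDiagDecode_comp hT hβ hβρ) hdim,
    fun x y z w hw => Prod.ext_iff.1 (hβ.offDiagDecode_mul_star_mul hw)⟩
end
end
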